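/- (Fischer–Lynch–Paterson, derived axiomatically) There is no always-terminating resilient consensus protocol: if a protocol with a C-chromatic coloring has every event associated with exactly one principal, satisfies the resiliency property (Res), and its empty run is polychromatic, then it has a fair sequence no finite prefix of which is monochromatic; in particular it is not a decision protocol. -/

import Mathlib

open Classical in
/-- The subsequence of a run consisting of those events whose principal set
meets `Q`. -/
noncomputable def restrictRun {E P : Type*} (prin : E → Set P) (Q : Set P)
    (x : List E) : List E :=
  x.filter fun e => decide ((prin e ∩ Q).Nonempty)

/-- `y` includes `x`: for every principal `p`, the subsequence of `x` of
events seen by `p` is a prefix of the corresponding subsequence of `y`. -/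
def RunIncludes {E P : Type*} (prin : E → Set P) (x y : List E) : Prop :=
  ∀ p : P, restrictRun prin {p} x <+: restrictRun prin {p} y

/-- `x` and `y` are equivalent with respect to the set `Q` of principals:
their subsequences of events whose principal sets meet `Q` coincide. -/
def RunEquiv {E P : Type*} (prin : E → Set P) (Q : Set P)
    (x y : List E) : Prop :=
  restrictRun prin Q x = restrictRun prin Q y

/-- An asynchronous protocol: a prefix-closed set of runs satisfying property
`P2`.  (Property `P3` — finitely many events are enabled at each run — holds
automatically since the set `E` of events is finite.) -/
structure Protocol (E P : Type*) where
  prin : E → Set P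
  prin_nonempty : ∀ e, (prin e).Nonempty
  runs : Set (List E)
  prefix_closed : ∀ x y : List E, x <+: y → y ∈ runs → x ∈ runs
  p2 : ∀ (x y : List E) (e : E), x ++ [e] ∈ runs → y ∈ runs →
    RunIncludes prin x y → RunEquiv prin (prin e) x y → y ++ [e] ∈ runs

/-- An event `e` is enabled at a run `x` if `x·e` is also a run. -/
def Protocol.Enabled {E P : Type*} (Pr : Protocol E P)
    (x : List E) (e : E) : Prop :=
  x ++ [e] ∈ Pr.runs

/-- A run is monochromatic if its color is a singleton. -/
def Monochromatic {E C : Type*} (col : List E → Set C) (x : List E) : Prop :=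
  ∃ c : C, col x = {c}

/-- A run is polychromatic if its color has at least two elements. -/
def Polychromatic {E C : Type*} (col : List E → Set C) (x : List E) : Prop :=
  ∃ c d : C, c ∈ col x ∧ d ∈ col x ∧ c ≠ d

/-- `col` is a `C`-chromatic coloring of the protocol: it satisfies conditions
`C1`, `C2` and `C3`. -/
def IsColoring {E P C : Type*} (Pr : Protocol E P)
    (col : List E → Set C) : Prop :=
  (∀ c : C, ∃ x ∈ Pr.runs, col x = {c}) ∧
  (∀ x ∈ Pr.runs, ∀ c ∈ col x, ∃ y ∈ Pr.runs, x <+: y ∧ col y = {c}) ∧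
  (∀ x ∈ Pr.runs, ∀ y ∈ Pr.runs, RunIncludes Pr.prin x y → col y ⊆ col x)

/-- Independence of Decisions (IoD). -/
def IoD {E P C : Type*} (Pr : Protocol E P) (col : List E → Set C) : Prop :=
  ∀ x ∈ Pr.runs, Polychromatic col x →
    ∀ e : E, Pr.Enabled x e → ∀ c : C, col (x ++ [e]) = {c} →
      ∀ e' : E, e' ≠ e → Pr.Enabled x e' →
        c ∈ col (x ++ [e']) ∧
        ((x ++ [e']) ++ [e] ∈ Pr.runs →
          ∀ d : C, col ((x ++ [e']) ++ [e]) = {d} → d = c)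

/-- The prefix of length `k` of an infinite sequence of events. -/
def prefixList {E : Type*} (π : ℕ → E) (k : ℕ) : List E :=
  List.ofFn fun j : Fin k => π (j : ℕ)

/-- An infinite fair sequence: all finite prefixes are runs and every event
enabled at all but finitely many prefixes occurs infinitely often. -/
def InfFairSeq {E P : Type*} (Pr : Protocol E P) (π : ℕ → E) : Prop :=
  (∀ k : ℕ, prefixList π k ∈ Pr.runs) ∧
  ∀ e : E, (∃ N : ℕ, ∀ k : ℕ, N ≤ k → Pr.Enabled (prefixList π k) e) →
    ∀ N : ℕ, ∃ k : ℕ, N ≤ k ∧ π k = e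

/-- A finite fair sequence: a run at which no event is enabled. -/
def FinFairSeq {E P : Type*} (Pr : Protocol E P) (x : List E) : Prop :=
  x ∈ Pr.runs ∧ ∀ e : E, ¬ Pr.Enabled x e

/-- The decision property `D`: every fair sequence (finite or infinite) has a
monochromatic finite prefix. -/
def DecisionProtocol {E P C : Type*} (Pr : Protocol E P)
    (col : List E → Set C) : Prop :=
  (∀ x : List E, FinFairSeq Pr x → ∃ p : List E, p <+: x ∧ Monochromatic col p) ∧
  (∀ π : ℕ → E, InfFairSeq Pr π → ∃ k : ℕ, Monochromatic col (prefixList π k))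

/-- The resiliency property `Res`: for each run `x` and each principal `i`
there is a monochromatic run extending `x` that is equivalent to `x` with
respect to `{i}` (i.e. that involves no further events seen by `i`). -/
def Resilient {E P C : Type*} (Pr : Protocol E P)
    (col : List E → Set C) : Prop :=
  ∀ x ∈ Pr.runs, ∀ i : P, ∃ y ∈ Pr.runs,
    x <+: y ∧ Monochromatic col y ∧ RunEquiv Pr.prin {i} x y

/-!
If every polychromatic extension `y` of a polychromatic run `x` had `y·e` monochromatic, the
decision `c` of `x·e` would persist along any path from `x` to a run of another colour `d`:
across an event `f` of another principal because `e` and `f` commute (P2), and across an event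
of `e`'s own principal `p` because a monochromatic extension in which `p` stays silent (Res)
carries its colour to both `x'·e` and `x'·f·e`. So some polychromatic extension leaves `e`
undecided. Serving the events round robin through such extensions gives a fair sequence that
stays polychromatic forever, unless it gets stuck at a polychromatic run with no enabled event.
-/

section

variable {E P C : Type*}

section Restriction

variable {prin : E → Set P}

lemma restrictRun_append (Q : Set P) (x y : List E) :
    restrictRun prin Q (x ++ y) = restrictRun prin Q x ++ restrictRun prin Q y :=
  List.filter_append ..

lemma restrictRun_singleton_of_prin_eq {e : E} {p : P} (he : prin e = {p}) :
    restrictRun prin {p} [e] = [e] := by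
  simp [restrictRun, he]

lemma restrictRun_singleton_of_prin_ne {e : E} {p q : P} (he : prin e = {p}) (hpq : p ≠ q) :
    restrictRun prin {q} [e] = [] := by
  simp [restrictRun, he, hpq]

lemma RunIncludes.of_prefix {x y : List E} (h : x <+: y) : RunIncludes prin x y :=
  fun _ => h.filter _

lemma RunEquiv.append {Q : Set P} {x y : List E} (h : RunEquiv prin Q x y) (u : List E) :
    RunEquiv prin Q (x ++ u) (y ++ u) := by
  unfold RunEquiv at h ⊢
  rw [restrictRun_append, restrictRun_append, h]

lemma runEquiv_append_of_prin_ne {f : E} {p q : P} (hf : prin f = {q}) (hqp : q ≠ p)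
    (x : List E) : RunEquiv prin {p} x (x ++ [f]) := by
  rw [RunEquiv, restrictRun_append, restrictRun_singleton_of_prin_ne hf hqp, List.append_nil]

lemma RunIncludes.append_of_prin_eq {e : E} {p : P} (he : prin e = {p}) {x y : List E}
    (hinc : RunIncludes prin x y) (heq : RunEquiv prin {p} x y) :
    RunIncludes prin (x ++ [e]) (y ++ [e]) := by
  intro q
  rw [restrictRun_append, restrictRun_append]
  by_cases hpq : p = q
  · subst hpq
    rw [restrictRun_singleton_of_prin_eq he, heq]
  · rw [restrictRun_singleton_of_prin_ne he hpq, List.append_nil, List.append_nil]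
    exact hinc q

end Restriction

lemma Protocol.append_mem_runs_of_runEquiv (Pr : Protocol E P) {p : P} {x y u : List E}
    (hu : ∀ f ∈ u, Pr.prin f = {p}) (hxu : x ++ u ∈ Pr.runs) (hy : y ∈ Pr.runs)
    (hinc : RunIncludes Pr.prin x y) (heq : RunEquiv Pr.prin {p} x y) :
    y ++ u ∈ Pr.runs ∧ RunIncludes Pr.prin (x ++ u) (y ++ u) := by
  induction u using List.reverseRecOn with
  | nil => simpa using ⟨hy, hinc⟩
  | append_singleton u f ih =>
    have hf : Pr.prin f = {p} := hu f (by simp)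
    simp only [← List.append_assoc] at hxu ⊢
    obtain ⟨hyu, hincu⟩ :=
      ih (fun g hg => hu g (by simp [hg])) (Pr.prefix_closed _ _ (List.prefix_append _ _) hxu)
    have hequ := heq.append u
    exact ⟨Pr.p2 _ _ f hxu hyu hincu (hf ▸ hequ), hincu.append_of_prin_eq hf hequ⟩

section Coloring

variable {Pr : Protocol E P} {col : List E → Set C}

lemma IsColoring.nil_mem_runs (hcol : IsColoring Pr col) (c : C) : [] ∈ Pr.runs := by
  obtain ⟨x, hx, -⟩ := hcol.1 c
  exact Pr.prefix_closed _ _ List.nil_prefix hx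

lemma IsColoring.col_subset_of_prefix (hcol : IsColoring Pr col) {x y : List E}
    (hx : x ∈ Pr.runs) (hy : y ∈ Pr.runs) (h : x <+: y) : col y ⊆ col x :=
  hcol.2.2 x hx y hy (.of_prefix h)

lemma Resilient.col_nonempty (hres : Resilient Pr col) (hcol : IsColoring Pr col)
    {x : List E} (hx : x ∈ Pr.runs) (i : P) : (col x).Nonempty := by
  obtain ⟨y, hy, hxy, ⟨c, hc⟩, -⟩ := hres x hx i
  exact ⟨c, hcol.col_subset_of_prefix hx hy hxy (hc ▸ rfl)⟩

lemma Polychromatic.not_monochromatic {x : List E} (h : Polychromatic col x) :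
    ¬ Monochromatic col x := by
  rintro ⟨c, hc⟩
  obtain ⟨a, b, ha, hb, hab⟩ := h
  rw [hc, Set.mem_singleton_iff] at ha hb
  exact hab (ha.trans hb.symm)

lemma polychromatic_of_not_monochromatic {x : List E} (hne : (col x).Nonempty)
    (h : ¬ Monochromatic col x) : Polychromatic col x := by
  obtain ⟨a, ha, b, hb, hab⟩ := hne.exists_eq_singleton_or_nontrivial.resolve_left h
  exact ⟨a, b, ha, hb, hab⟩

lemma Polychromatic.of_prefix (hcol : IsColoring Pr col) {x y : List E}
    (hx : x ∈ Pr.runs) (hy : y ∈ Pr.runs) (h : x <+: y) (hp : Polychromatic col y) :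
    Polychromatic col x := by
  obtain ⟨c, d, hc, hd, hcd⟩ := hp
  exact ⟨c, d, hcol.col_subset_of_prefix hx hy h hc, hcol.col_subset_of_prefix hx hy h hd, hcd⟩

end Coloring

section FLP

variable {Pr : Protocol E P} {col : List E → Set C}

/-- A monochromatic extension in which `p` stays silent is included in every extension by
`p`-events, so its colour lies in the colour of each of them; it is therefore the colour of
any such extension that is monochromatic. -/
lemma mem_col_append_of_prin_eq (hcol : IsColoring Pr col) (hres : Resilient Pr col)
    {p : P} {x u v : List E} {c : C} (hx : x ∈ Pr.runs)
    (hu : ∀ f ∈ u, Pr.prin f = {p}) (hv : ∀ f ∈ v, Pr.prin f = {p})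
    (hxu : x ++ u ∈ Pr.runs) (hxv : x ++ v ∈ Pr.runs) (hc : col (x ++ u) = {c}) :
    c ∈ col (x ++ v) := by
  obtain ⟨z, hz, hxz, ⟨c', hc'⟩, hxz_equiv⟩ := hres x hx p
  have hsub : ∀ w : List E, (∀ f ∈ w, Pr.prin f = {p}) → x ++ w ∈ Pr.runs →
      col z ⊆ col (x ++ w) := by
    intro w hw hxw
    obtain ⟨hzw, hinc⟩ := Pr.append_mem_runs_of_runEquiv hw hxw hz (.of_prefix hxz) hxz_equiv
    have hzw_col : col (z ++ w) = col z :=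
      hc' ▸ (hres.col_nonempty hcol hzw p).subset_singleton_iff.mp
        (hc' ▸ hcol.col_subset_of_prefix hz hzw (List.prefix_append z w))
    exact hzw_col ▸ hcol.2.2 _ hxw _ hzw hinc
  have hz_col : col z = {c} :=
    (hres.col_nonempty hcol hz p).subset_singleton_iff.mp (hc ▸ hsub u hu hxu)
  exact hsub v hv hxv (hz_col ▸ rfl)

lemma col_append_append_of_prin_ne (hcol : IsColoring Pr col) (hres : Resilient Pr col)
    {e f : E} {p q : P} (he : Pr.prin e = {p}) (hf : Pr.prin f = {q}) (hqp : q ≠ p)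
    {x : List E} {c : C} (hxe : x ++ [e] ∈ Pr.runs) (hxf : x ++ [f] ∈ Pr.runs)
    (hc : col (x ++ [e]) = {c}) :
    x ++ [f] ++ [e] ∈ Pr.runs ∧ col (x ++ [f] ++ [e]) = {c} := by
  have hequiv := runEquiv_append_of_prin_ne hf hqp x
  have hinc : RunIncludes Pr.prin x (x ++ [f]) := .of_prefix (List.prefix_append x [f])
  have hxfe := Pr.p2 _ _ e hxe hxf hinc (he ▸ hequiv)
  exact ⟨hxfe, (hres.col_nonempty hcol hxfe p).subset_singleton_iff.mp
    (hc ▸ hcol.2.2 _ hxe _ hxfe (hinc.append_of_prin_eq he hequiv))⟩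

lemma decided_append_of_forall_decided (hcol : IsColoring Pr col)
    (hsingle : ∀ e : E, ∃ p : P, Pr.prin e = {p}) (hres : Resilient Pr col) {x : List E} {e : E}
    (hdecided : ∀ y ∈ Pr.runs, x <+: y → Polychromatic col y →
      y ++ [e] ∈ Pr.runs ∧ Monochromatic col (y ++ [e]))
    {x' : List E} {f : E} {c d : C} (hxx' : x <+: x') (hx'e : x' ++ [e] ∈ Pr.runs)
    (hc : col (x' ++ [e]) = {c}) (hx'f : x' ++ [f] ∈ Pr.runs) (hd : d ∈ col (x' ++ [f]))
    (hdc : d ≠ c) :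
    x' ++ [f] ++ [e] ∈ Pr.runs ∧ col (x' ++ [f] ++ [e]) = {c} := by
  obtain ⟨p, he⟩ := hsingle e
  obtain ⟨q, hf⟩ := hsingle f
  have hx' : x' ∈ Pr.runs := Pr.prefix_closed _ _ (List.prefix_append _ _) hx'f
  by_cases hqp : q = p
  · subst hqp
    have hcx'f : c ∈ col (x' ++ [f]) :=
      mem_col_append_of_prin_eq hcol hres hx' (by simpa) (by simpa) hx'e hx'f hc
    obtain ⟨hx'fe, c', hc'⟩ := hdecided _ hx'f (hxx'.trans (List.prefix_append _ _))
      ⟨c, d, hcx'f, hd, hdc.symm⟩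
    have hcx'fe : c ∈ col (x' ++ [f] ++ [e]) := by
      rw [List.append_assoc] at hx'fe ⊢
      exact mem_col_append_of_prin_eq hcol hres hx' (by simpa) (by simp [hf, he]) hx'e hx'fe hc
    rw [hc', Set.mem_singleton_iff] at hcx'fe
    exact ⟨hx'fe, hcx'fe ▸ hc'⟩
  · exact col_append_append_of_prin_ne hcol hres he hf hqp hx'e hx'f hc

theorem exists_polychromatic_extension_undecided (hcol : IsColoring Pr col)
    (hsingle : ∀ e : E, ∃ p : P, Pr.prin e = {p}) (hres : Resilient Pr col)
    {x : List E} (hx : x ∈ Pr.runs) (hpx : Polychromatic col x) (e : E) :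
    ∃ y ∈ Pr.runs, x <+: y ∧ Polychromatic col y ∧
      ¬ (y ++ [e] ∈ Pr.runs ∧ Monochromatic col (y ++ [e])) := by
  by_contra! hdecided
  obtain ⟨hxe, c, hc⟩ := hdecided x hx List.prefix_rfl hpx
  obtain ⟨d, hd, hdc⟩ : ∃ d ∈ col x, d ≠ c := by
    obtain ⟨a, b, ha, hb, hab⟩ := hpx
    by_cases hac : a = c
    · exact ⟨b, hb, fun hbc => hab (hac.trans hbc.symm)⟩
    · exact ⟨a, ha, hac⟩
  obtain ⟨w, hw, ⟨s, rfl⟩, hwd⟩ := hcol.2.1 x hx d hd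
  suffices hpath : ∀ s' x', x' ++ s' = x ++ s → x <+: x' → x' ++ [e] ∈ Pr.runs →
      col (x' ++ [e]) = {c} → c ∈ col (x ++ s) by
    have hcw := hpath s x rfl List.prefix_rfl hxe hc
    rw [hwd, Set.mem_singleton_iff] at hcw
    exact hdc hcw.symm
  intro s'
  induction s' with
  | nil =>
    intro x' hx'w _ hx'e hx'c
    rw [← hx'w, List.append_nil]
    exact hcol.col_subset_of_prefix (Pr.prefix_closed _ _ (List.prefix_append _ _) hx'e)
      hx'e (List.prefix_append _ _) (hx'c ▸ rfl)
  | cons f s' ih =>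
    intro x' hx'w hxx' hx'e hx'c
    have hx'f_w : x' ++ [f] ++ s' = x ++ s := by simpa using hx'w
    have hx'f : x' ++ [f] ∈ Pr.runs := Pr.prefix_closed _ _ ⟨s', hx'f_w⟩ hw
    have hdx'f : d ∈ col (x' ++ [f]) := hcol.col_subset_of_prefix hx'f hw ⟨s', hx'f_w⟩ (hwd ▸ rfl)
    obtain ⟨hx'fe, hx'fe_col⟩ := decided_append_of_forall_decided hcol hsingle hres hdecided
      hxx' hx'e hx'c hx'f hdx'f hdc
    exact ih _ hx'f_w (hxx'.trans (List.prefix_append _ _)) hx'fe hx'fe_col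

end FLP

lemma exists_seq_frequently_eq (α : Type*) [Countable α] [Nonempty α] :
    ∃ ν : ℕ → α, ∀ (a : α) (N : ℕ), ∃ k, N ≤ k ∧ ν k = a := by
  obtain ⟨g, hg⟩ := exists_surjective_nat α
  refine ⟨fun k => g k.unpair.1, fun a N => ?_⟩
  obtain ⟨i, rfl⟩ := hg a
  exact ⟨Nat.pair i N, Nat.right_le_pair i N, by simp⟩

lemma prefixList_eq_take {π : ℕ → E} {l : List E} (h : ∀ i (hi : i < l.length), l[i] = π i)
    {k : ℕ} (hk : k ≤ l.length) : prefixList π k = l.take k :=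
  List.ext_getElem (by simp [prefixList, hk]) fun i _ _ => by simp [prefixList, h]

lemma exists_getElem_eq_of_chain {X : ℕ → List E} (hX : ∀ n, X n <+: X (n + 1))
    (hlen : ∀ n, n ≤ (X n).length) :
    ∃ π : ℕ → E, ∀ n i (hi : i < (X n).length), (X n)[i] = π i := by
  have hchain := Nat.rel_of_forall_rel_succ_of_le (· <+: ·) hX
  refine ⟨fun i => (X (i + 1))[i]'(hlen (i + 1)), fun n i hi => ?_⟩
  rcases le_total n (i + 1) with h | h
  · exact (hchain h).getElem hi
  · exact ((hchain h).getElem _).symm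

/-- Scheduling the events round robin, each step either disables the scheduled event or
executes it beyond the current run; since runs grow at every step, this gives fairness. -/
theorem Protocol.exists_infFairSeq [Countable E] [Nonempty E] (Pr : Protocol E P)
    (good : List E → Prop) (hrun : ∀ x, good x → x ∈ Pr.runs) {x₀ : List E} (hx₀ : good x₀)
    (hstep : ∀ x, good x → ∀ e, ∃ y, good y ∧ x <+: y ∧ x.length < y.length ∧
      (Pr.Enabled x e → ¬ Pr.Enabled y e ∨ ∃ y', x <+: y' ∧ y = y' ++ [e])) :
    ∃ π : ℕ → E, InfFairSeq Pr π ∧ ∀ k, ∃ y, good y ∧ prefixList π k <+: y := by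
  obtain ⟨ν, hν⟩ := exists_seq_frequently_eq E
  choose F hF_good hF_prefix hF_len hF_enabled using hstep
  let X : ℕ → {x // good x} := fun n =>
    Nat.rec ⟨x₀, hx₀⟩ (fun n x => ⟨F x.1 x.2 (ν n), hF_good _ _ _⟩) n
  have hX_succ : ∀ n, (X (n + 1)).1 = F (X n).1 (X n).2 (ν n) := fun _ => rfl
  have hlen : ∀ n, n ≤ (X n).1.length := by
    intro n
    induction n with
    | zero => exact Nat.zero_le _
    | succ n ih => exact (hX_succ n ▸ hF_len _ _ _).trans_le' ih
  obtain ⟨π, hπ⟩ := exists_getElem_eq_of_chain (fun n => hX_succ n ▸ hF_prefix _ _ _) hlen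
  have hX_eq : ∀ n, prefixList π (X n).1.length = (X n).1 := fun n => by
    rw [prefixList_eq_take (hπ n) le_rfl, List.take_length]
  have hprefix : ∀ k, prefixList π k <+: (X k).1 := fun k =>
    prefixList_eq_take (hπ k) (hlen k) ▸ List.take_prefix _ _
  refine ⟨π, ⟨fun k => Pr.prefix_closed _ _ (hprefix k) (hrun _ (X k).2), ?_⟩,
    fun k => ⟨_, (X k).2, hprefix k⟩⟩
  rintro e ⟨N, hN⟩ M
  obtain ⟨n, hn, rfl⟩ := hν e (max N M)
  have henabled : ∀ m, n ≤ m → Pr.Enabled (X m).1 (ν n) := fun m hm =>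
    hX_eq m ▸ hN _ (by have := hlen m; omega)
  rcases hF_enabled _ _ _ (henabled n le_rfl) with hdisabled | ⟨y', hy', hXy'⟩
  · exact absurd (hX_succ n ▸ henabled (n + 1) n.le_succ) hdisabled
  · have hy'_len : y'.length < (X (n + 1)).1.length := by simp [hX_succ, hXy']
    refine ⟨y'.length, by have := hlen n; have := hy'.length_le; omega, ?_⟩
    rw [← hπ (n + 1) _ hy'_len]
    simp [hX_succ, hXy']

section Consensus

variable {Pr : Protocol E P} {col : List E → Set C}

lemma exists_longer_polychromatic_extension (hcol : IsColoring Pr col)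
    (hsingle : ∀ e : E, ∃ p : P, Pr.prin e = {p}) (hres : Resilient Pr col)
    (hlive : ∀ x ∈ Pr.runs, Polychromatic col x → ∃ e, Pr.Enabled x e)
    {x : List E} (hx : x ∈ Pr.runs) (hpx : Polychromatic col x) (e : E) :
    ∃ y, (y ∈ Pr.runs ∧ Polychromatic col y) ∧ x <+: y ∧ x.length < y.length ∧
      (Pr.Enabled x e → ¬ Pr.Enabled y e ∨ ∃ y', x <+: y' ∧ y = y' ++ [e]) := by
  obtain ⟨e', hxe', he'⟩ : ∃ e', Pr.Enabled x e' ∧ (Pr.Enabled x e → e' = e) := by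
    by_cases hxe : Pr.Enabled x e
    · exact ⟨e, hxe, fun _ => rfl⟩
    · obtain ⟨e', hxe'⟩ := hlive x hx hpx
      exact ⟨e', hxe', fun h => absurd h hxe⟩
  obtain ⟨y, hy, hxy, hpy, hundecided⟩ :=
    exists_polychromatic_extension_undecided hcol hsingle hres hx hpx e'
  by_cases hye' : Pr.Enabled y e'
  · obtain ⟨p, -⟩ := hsingle e'
    have hpye' : Polychromatic col (y ++ [e']) :=
      polychromatic_of_not_monochromatic (hres.col_nonempty hcol hye' p)
        fun hm => hundecided ⟨hye', hm⟩
    refine ⟨y ++ [e'], ⟨hye', hpye'⟩, hxy.trans (List.prefix_append _ _), ?_,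
      fun hxe => .inr ⟨y, hxy, by rw [he' hxe]⟩⟩
    simpa using Nat.lt_succ_of_le hxy.length_le
  · have hxy_ne : x ≠ y := fun h => hye' (h ▸ hxe')
    refine ⟨y, ⟨hy, hpy⟩, hxy, ?_, fun hxe => .inl (he' hxe ▸ hye')⟩
    exact hxy.length_le.lt_of_ne fun h => hxy_ne (hxy.eq_of_length h)

theorem exists_fairSeq_not_monochromatic [Countable E] (hcol : IsColoring Pr col)
    (hsingle : ∀ e : E, ∃ p : P, Pr.prin e = {p}) (hres : Resilient Pr col)
    (hpoly : Polychromatic col ([] : List E)) :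
    (∃ x : List E, FinFairSeq Pr x ∧ ∀ p : List E, p <+: x → ¬ Monochromatic col p) ∨
    (∃ π : ℕ → E, InfFairSeq Pr π ∧ ∀ k : ℕ, ¬ Monochromatic col (prefixList π k)) := by
  have hnil : [] ∈ Pr.runs := by
    obtain ⟨c, -⟩ := hpoly
    exact hcol.nil_mem_runs c
  by_cases hstuck : ∃ x ∈ Pr.runs, Polychromatic col x ∧ ∀ e, ¬ Pr.Enabled x e
  · obtain ⟨x, hx, hpx, hdead⟩ := hstuck
    exact .inl ⟨x, ⟨hx, hdead⟩, fun p hp =>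
      (hpx.of_prefix hcol (Pr.prefix_closed _ _ hp hx) hx hp).not_monochromatic⟩
  · push Not at hstuck
    obtain ⟨e, -⟩ := hstuck [] hnil hpoly
    have : Nonempty E := ⟨e⟩
    obtain ⟨π, hπ, hgood⟩ := Pr.exists_infFairSeq (fun x => x ∈ Pr.runs ∧ Polychromatic col x)
      (fun _ => And.left) ⟨hnil, hpoly⟩ fun x hx =>
        exists_longer_polychromatic_extension hcol hsingle hres hstuck hx.1 hx.2
    refine .inr ⟨π, hπ, fun k => ?_⟩
    obtain ⟨y, ⟨hy, hpy⟩, hky⟩ := hgood k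
    exact (hpy.of_prefix hcol (hπ.1 k) hy hky).not_monochromatic

end Consensus

end

theorem flp_no_resilient_consensus_general
    {E P C : Type*} [Fintype E] (Pr : Protocol E P)
    (col : List E → Set C) (hcol : IsColoring Pr col)
    (hsingle : ∀ e : E, ∃ p : P, Pr.prin e = {p})
    (hres : Resilient Pr col)
    (hpoly : Polychromatic col ([] : List E)) :
    ((∃ x : List E, FinFairSeq Pr x ∧
        ∀ p : List E, p <+: x → ¬ Monochromatic col p) ∨
     (∃ π : ℕ → E, InfFairSeq Pr π ∧
        ∀ k : ℕ, ¬ Monochromatic col (prefixList π k))) ∧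
    ¬ DecisionProtocol Pr col := by
  have hfair := exists_fairSeq_not_monochromatic hcol hsingle hres hpoly
  refine ⟨hfair, fun ⟨hfin, hinf⟩ => ?_⟩
  rcases hfair with ⟨x, hx, hnot_mono⟩ | ⟨π, hπ, hnot_mono⟩
  · obtain ⟨p, hp, hmono⟩ := hfin x hx
    exact hnot_mono p hp hmono
  · obtain ⟨k, hk⟩ := hinf π hπ
    exact hnot_mono k hk

/-- **Fischer–Lynch–Paterson, axiomatically.** A resilient
consensus protocol (every event's principal set is a singleton, `Res` holds)
whose empty run is polychromatic has a fair sequence no finite prefix of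
which is monochromatic; in particular it is not a decision protocol. -/
theorem flp_no_resilient_consensus
    {E P C : Type*} [Fintype E] (Pr : Protocol E P)
    (col : List E → Set C) (hcol : IsColoring Pr col)
    (hsingle : ∀ e : E, ∃ p : P, Pr.prin e = {p})
    (hres : Resilient Pr col)
    (hnil : ([] : List E) ∈ Pr.runs) (hpoly : Polychromatic col ([] : List E)) :
    ((∃ x : List E, FinFairSeq Pr x ∧
        ∀ p : List E, p <+: x → ¬ Monochromatic col p) ∨
     (∃ π : ℕ → E, InfFairSeq Pr π ∧
        ∀ k : ℕ, ¬ Monochromatic col (prefixList π k))) ∧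
    ¬ DecisionProtocol Pr col :=
  flp_no_resilient_consensus_general Pr col hcol hsingle hres hpoly
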